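/- Consider the relaxed structured pruning problem: minimize (1/2)‖WX − Y‖_F² over W ∈ ℝ^{m×n}, s ∈ [0,1]^n subject to W·diag(s) = 0 and 1ᵀs = λ, where λ ∈ ℕ with 1 ≤ λ ≤ n. If (Ŵ, ŝ) is an optimal solution and J is any λ-element subset of the support of ŝ, then (Ŵ, s') is also optimal, where s' is the indicator vector of J (i.e., s'_i = 1 if i ∈ J, else 0). -/

import Mathlib

open Matrix

theorem Matrix.mul_diagonal_eq_zero_of_support_subset {m n α : Type*} [Fintype n]
    [DecidableEq n] [NonUnitalNonAssocSemiring α] [NoZeroDivisors α]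
    {W : Matrix m n α} {s t : n → α} (hW : W * diagonal s = 0)
    (hts : ∀ i, t i ≠ 0 → s i ≠ 0) : W * diagonal t = 0 := by
  ext j k
  have hjk : W j k * s k = 0 := by
    simpa only [mul_diagonal, zero_apply] using congrFun (congrFun hW j) k
  rw [mul_diagonal, zero_apply]
  by_cases htk : t k = 0
  · rw [htk, mul_zero]
  · rw [(mul_eq_zero.mp hjk).resolve_right (hts k htk), zero_mul]

theorem stmt1_general {m n : ℕ}
    (lam : ℕ)
    (f : Matrix (Fin m) (Fin n) ℝ → ℝ)
    (Feas : Matrix (Fin m) (Fin n) ℝ → (Fin n → ℝ) → Prop)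
    (hFeas : Feas = fun W s =>
      W * Matrix.diagonal s = (0 : Matrix (Fin m) (Fin n) ℝ) ∧ (∀ i, 0 ≤ s i ∧ s i ≤ 1) ∧ ∑ i, s i = (lam : ℝ))
    (What : Matrix (Fin m) (Fin n) ℝ) (shat : Fin n → ℝ)
    (hopt : Feas What shat ∧ ∀ W s, Feas W s → f What ≤ f W)
    (J : Finset (Fin n)) (hJcard : J.card = lam) (hJsupp : ∀ i ∈ J, shat i ≠ 0) :
    Feas What (fun i => if i ∈ J then 1 else 0) ∧
      ∀ W s, Feas W s → f What ≤ f W := by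
  obtain ⟨hfeas, hmin⟩ := hopt
  subst hFeas
  refine ⟨⟨?_, fun i => ?_, ?_⟩, hmin⟩
  · refine mul_diagonal_eq_zero_of_support_subset hfeas.1 fun i hi => hJsupp i ?_
    by_contra hiJ
    exact hi (if_neg hiJ)
  · by_cases hi : i ∈ J <;> simp [hi]
  · simp [hJcard]

/-- Optimal solutions of the relaxed structured pruning problem can be
binarized on any `λ`-subset of the support. -/
theorem stmt1 {m n p : ℕ} (X : Matrix (Fin n) (Fin p) ℝ) (Y : Matrix (Fin m) (Fin p) ℝ)
    (lam : ℕ) (hlam : 1 ≤ lam) (hlamn : lam ≤ n)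
    (f : Matrix (Fin m) (Fin n) ℝ → ℝ)
    (hf : f = fun W => (1 / 2) * ∑ j, ∑ k, ((W * X - Y) j k) ^ 2)
    (Feas : Matrix (Fin m) (Fin n) ℝ → (Fin n → ℝ) → Prop)
    (hFeas : Feas = fun W s =>
      W * Matrix.diagonal s = (0 : Matrix (Fin m) (Fin n) ℝ) ∧ (∀ i, 0 ≤ s i ∧ s i ≤ 1) ∧ ∑ i, s i = (lam : ℝ))
    (What : Matrix (Fin m) (Fin n) ℝ) (shat : Fin n → ℝ)
    (hopt : Feas What shat ∧ ∀ W s, Feas W s → f What ≤ f W)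
    (J : Finset (Fin n)) (hJcard : J.card = lam) (hJsupp : ∀ i ∈ J, shat i ≠ 0) :
    Feas What (fun i => if i ∈ J then 1 else 0) ∧
      ∀ W s, Feas W s → f What ≤ f W :=
  stmt1_general lam f Feas hFeas What shat hopt J hJcard hJsupp
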